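/- arXiv:2006.00641 — 6 statements merged into one kernel-verified Lean document; each statement's English description precedes it below -/
import Mathlib

section
/- Let Q be an involutory quandle (a set with operation ◁ satisfying x◁x = x, x◁(x◁y) = y, and (x◁y)◁z = x◁(y◁(x◁z))), and let (xᵢ)_{i∈ℤ} be a trajectory in Q, i.e., x_{i+1} = xᵢ ◁ x_{i-1} for all i. If xᵢ = x_{i+m} for some i ∈ ℤ and some m > 0, then x_j = x_{j+2m} for all j ∈ ℤ. -/
/-!
Every element `xₐ` of a trajectory acts on the trajectory as the reflection `j ↦ 2a - j` of
indices: `xₐ ◁ xₐ₊ₙ = xₐ₋ₙ` follows by two-step induction on `n ≥ 0`, since `xₐ ◁ -` is an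
automorphism, and the case `n < 0` follows by involutivity. If `xᵢ = xᵢ₊ₘ`, the reflections
about `i` and `i + m` agree on the trajectory, and composing them shifts indices by `2m`.
-/

def IsTrajectory {Q : Type*} (op : Q → Q → Q) (x : ℤ → Q) : Prop :=
  ∀ i : ℤ, x (i + 1) = op (x i) (x (i - 1))

section Trajectory

variable {Q : Type*} {op : Q → Q → Q} {x : ℤ → Q}

theorem IsTrajectory.op_add_one (hinv : ∀ a b, op a (op a b) = b) (htraj : IsTrajectory op x)
    (a : ℤ) : op (x a) (x (a + 1)) = x (a - 1) := by
  rw [htraj, hinv]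

theorem IsTrajectory.op_add_natCast (hidem : ∀ a, op a a = a)
    (hinv : ∀ a b, op a (op a b) = b)
    (hldist : ∀ a b c, op a (op b c) = op (op a b) (op a c))
    (htraj : IsTrajectory op x) (n : ℕ) (a : ℤ) : op (x a) (x (a + n)) = x (a - n) := by
  induction n using Nat.twoStepInduction with
  | zero => simpa using hidem (x a)
  | one => simpa using htraj.op_add_one hinv a
  | more n ih₀ ih₁ =>
    have hnext : x (a + ↑(n + 2)) = op (x (a + ↑(n + 1))) (x (a + n)) := by
      have := htraj (a + ↑(n + 1))
      rwa [show a + ↑(n + 1) + 1 = a + ↑(n + 2) by push_cast; ring,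
        show a + ↑(n + 1) - 1 = a + n by push_cast; ring] at this
    have hprev : x (a - ↑(n + 2)) = op (x (a - ↑(n + 1))) (x (a - n)) := by
      have := htraj.op_add_one hinv (a - ↑(n + 1))
      rwa [show a - ↑(n + 1) + 1 = a - n by push_cast; ring,
        show a - ↑(n + 1) - 1 = a - ↑(n + 2) by push_cast; ring, eq_comm] at this
    rw [hnext, hldist, ih₀, ih₁, hprev]

theorem IsTrajectory.op_eq_two_mul_sub (hidem : ∀ a, op a a = a)
    (hinv : ∀ a b, op a (op a b) = b)
    (hldist : ∀ a b c, op a (op b c) = op (op a b) (op a c))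
    (htraj : IsTrajectory op x) (a b : ℤ) : op (x a) (x b) = x (2 * a - b) := by
  have hrefl := htraj.op_add_natCast hidem hinv hldist
  rcases le_total a b with hab | hba
  · obtain ⟨n, rfl⟩ := Int.le.dest hab
    rw [hrefl]
    congr 1
    ring
  · obtain ⟨n, hn⟩ := Int.le.dest hba
    obtain rfl : b = a - n := by omega
    rw [← hrefl, hinv]
    congr 1
    ring

end Trajectory

theorem trajectory_periodic_quandle_general {Q : Type*} (op : Q → Q → Q)
    (hidem : ∀ x, op x x = x)
    (hinv : ∀ x y, op x (op x y) = y)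
    (hdist : ∀ x y z, op (op x y) z = op x (op y (op x z)))
    (x : ℤ → Q)
    (htraj : ∀ i : ℤ, x (i + 1) = op (x i) (x (i - 1)))
    (i : ℤ) (m : ℤ) (hper : x i = x (i + m)) :
    ∀ j : ℤ, x j = x (j + 2 * m) := by
  have hldist : ∀ a b c, op a (op b c) = op (op a b) (op a c) := fun a b c => by
    rw [hdist, hinv]
  have hreflect := IsTrajectory.op_eq_two_mul_sub hidem hinv hldist htraj
  intro j
  calc x j = op (x i) (x (2 * i - j)) := by rw [hreflect, sub_sub_cancel]
    _ = op (x (i + m)) (x (2 * i - j)) := by rw [hper]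
    _ = x (j + 2 * m) := by rw [hreflect]; congr 1; ring

theorem trajectory_periodic_quandle {Q : Type*} (op : Q → Q → Q)
    (hidem : ∀ x, op x x = x)
    (hinv : ∀ x y, op x (op x y) = y)
    (hdist : ∀ x y z, op (op x y) z = op x (op y (op x z)))
    (x : ℤ → Q)
    (htraj : ∀ i : ℤ, x (i + 1) = op (x i) (x (i - 1)))
    (i : ℤ) (m : ℤ) (hm : 0 < m) (hper : x i = x (i + m)) :
    ∀ j : ℤ, x j = x (j + 2 * m) :=
  trajectory_periodic_quandle_general op hidem hinv hdist x htraj i m hper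
end

section
/- Let G be a group with core operation x ◁ y = x y⁻¹ x, and let x̄ denote the map y ↦ x ◁ y on G. For x, x′ ∈ G, one has x̄ = x̄′ if and only if x′⁻¹ x is central in G and (x′⁻¹ x)² = 1. -/
/-! Put `c = x'⁻¹ * x`, so `x = x' * c`. Cancelling `x'` on the left and substituting
`z = y⁻¹ * x'` turns `x * y⁻¹ * x = x' * y⁻¹ * x'` into `c * z * c = z`. Holding for all `z`,
this gives `c ^ 2 = 1` at `z = 1`, hence `c = c⁻¹` and `c * z * c⁻¹ = z`, i.e. `c` is central. -/

theorem forall_mul_mul_self_eq_iff {M : Type*} [Monoid M] (c : M) :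
    (∀ z : M, c * z * c = z) ↔ c ∈ Submonoid.center M ∧ c ^ 2 = 1 := by
  rw [Submonoid.mem_center_iff]
  constructor
  · intro h
    have hsq : c * c = 1 := by simpa using h 1
    refine ⟨fun g => ?_, by rw [sq, hsq]⟩
    calc g * c = c * g * c * c := by rw [h g]
      _ = c * g := by rw [mul_assoc, hsq, mul_one]
  · rintro ⟨hcomm, hsq⟩ z
    rw [mul_assoc, hcomm z, ← mul_assoc, ← sq, hsq, one_mul]

theorem core_symmetry_eq_iff_forall {G : Type*} [Group G] (x x' : G) :
    (fun y : G => x * y⁻¹ * x) = (fun y : G => x' * y⁻¹ * x') ↔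
      ∀ z : G, x'⁻¹ * x * z * (x'⁻¹ * x) = z := by
  have key : ∀ y : G, (x * y⁻¹ * x = x' * y⁻¹ * x') ↔
      x'⁻¹ * x * (y⁻¹ * x') * (x'⁻¹ * x) = y⁻¹ * x' := by
    intro y
    rw [← mul_right_inj x'⁻¹]
    constructor <;> intro h <;> convert h using 1 <;> group
  rw [funext_iff]
  constructor
  · intro h z
    simpa using (key (x' * z⁻¹)).mp (h _)
  · exact fun h y => (key y).mpr (h _)

theorem symmetry_eq_iff (G : Type*) [Group G] (x x' : G) :
    (fun y : G => x * y⁻¹ * x) = (fun y : G => x' * y⁻¹ * x') ↔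
    (x'⁻¹ * x ∈ Subgroup.center G ∧ (x'⁻¹ * x) ^ 2 = 1) := by
  rw [core_symmetry_eq_iff_forall, forall_mul_mul_self_eq_iff, ← Subgroup.center_toSubmonoid]
  rfl
end

section
/- For any group G, the map x ↦ (u, x, x⁻¹) is an injective homomorphism of involutory quandles from Core(G) into the set of involutions of the semidirect product Z₂ ⋉ (G × G), where the nontrivial element u of Z₂ acts on G × G by swapping coordinates. In particular, each (u, x, x⁻¹) has square the identity, and (u, x◁y, (x◁y)⁻¹) = (u,x,x⁻¹)(u,y,y⁻¹)⁻¹(u,x,x⁻¹), where x ◁ y = x y⁻¹ x. -/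
/-- The swap automorphism of `G × G`. -/
def swapAut (G : Type*) [Group G] : MulAut (G × G) :=
  MulEquiv.prodComm (M := G) (N := G)

theorem swapAut_mul_self (G : Type*) [Group G] : swapAut G * swapAut G = 1 := by
  ext p <;> simp [swapAut]

/-- The action of `Z₂` on `G × G` in which the nontrivial element
interchanges the two factors. -/
def swapAction (G : Type*) [Group G] :
    Multiplicative (ZMod 2) →* MulAut (G × G) where
  toFun u := if (Multiplicative.toAdd u : ZMod 2) = 0 then 1 else swapAut G
  map_one' := by simp
  map_mul' a b := by
    have h : ∀ c : ZMod 2, c = 0 ∨ c = 1 := by decide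
    have h11 : (1 + 1 : ZMod 2) = 0 := by decide
    have h10 : (1 : ZMod 2) ≠ 0 := by decide
    rcases h (Multiplicative.toAdd a) with ha | ha <;>
      rcases h (Multiplicative.toAdd b) with hb | hb <;>
      simp [toAdd_mul, ha, hb, h11, h10, swapAut_mul_self]

/-- The nontrivial element of `Z₂`, viewed in the semidirect product
`(G × G) ⋊ Z₂`. -/
def uElt : Multiplicative (ZMod 2) := Multiplicative.ofAdd 1

/-- The map `x ↦ (u, x, x⁻¹)` from `G` into `Z₂ ⋉ (G × G)`. -/
def coreEmb (G : Type*) [Group G] :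
    G → (G × G) ⋊[swapAction G] Multiplicative (ZMod 2) :=
  fun x => ⟨(x, x⁻¹), uElt⟩

/-! Since `u` swaps the coordinates, `(u, x, x⁻¹) (u, y, y⁻¹) = (1, x y⁻¹, x⁻¹ y)`. Taking `y = x`
shows that `(u, x, x⁻¹)` is an involution, hence its own inverse, and multiplying once more by
`(u, x, x⁻¹)` gives `(u, x y⁻¹ x, x⁻¹ y x⁻¹) = (u, x ◁ y, (x ◁ y)⁻¹)`. -/

section

variable {G : Type*} [Group G]

theorem swapAction_uElt : swapAction G uElt = swapAut G := by
  simp [swapAction, uElt]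

theorem uElt_mul_self : uElt * uElt = 1 := by decide

theorem mk_uElt_mul_mk_uElt (a b c d : G) :
    (⟨(a, b), uElt⟩ : (G × G) ⋊[swapAction G] Multiplicative (ZMod 2)) * ⟨(c, d), uElt⟩ =
      ⟨(a * d, b * c), 1⟩ := by
  ext <;> simp [swapAction_uElt, uElt_mul_self, swapAut]

theorem mk_one_mul_mk_uElt (a b c d : G) :
    (⟨(a, b), 1⟩ : (G × G) ⋊[swapAction G] Multiplicative (ZMod 2)) * ⟨(c, d), uElt⟩ =
      ⟨(a * c, b * d), uElt⟩ := by
  ext <;> simp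

theorem coreEmb_injective : Function.Injective (coreEmb G) :=
  fun _ _ h => congrArg (fun p => p.left.1) h

theorem coreEmb_mul_coreEmb (x y : G) :
    coreEmb G x * coreEmb G y = ⟨(x * y⁻¹, x⁻¹ * y), 1⟩ :=
  mk_uElt_mul_mk_uElt _ _ _ _

theorem coreEmb_mul_self (x : G) : coreEmb G x * coreEmb G x = 1 := by
  rw [coreEmb_mul_coreEmb, mul_inv_cancel, inv_mul_cancel]
  rfl

theorem coreEmb_inv (x : G) : (coreEmb G x)⁻¹ = coreEmb G x :=
  inv_eq_of_mul_eq_one_right (coreEmb_mul_self x)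

theorem coreEmb_core (x y : G) :
    coreEmb G (x * y⁻¹ * x) = coreEmb G x * (coreEmb G y)⁻¹ * coreEmb G x := by
  rw [coreEmb_inv, coreEmb_mul_coreEmb, coreEmb, coreEmb, mk_one_mul_mk_uElt,
    mul_inv_rev, mul_inv_rev, inv_inv]
  simp only [mul_assoc]

end

theorem core_embeds_in_involutions (G : Type*) [Group G] :
    Function.Injective (coreEmb G) ∧
    (∀ x : G, coreEmb G x * coreEmb G x = 1) ∧
    (∀ x y : G,
      coreEmb G (x * y⁻¹ * x) =
        coreEmb G x * (coreEmb G y)⁻¹ * coreEmb G x) :=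
  ⟨coreEmb_injective, coreEmb_mul_self, coreEmb_core⟩
end

section
/- Let G be a group with core operation x ◁ y = x y⁻¹ x. Then the identity w ◁ (x ◁ (y ◁ z)) = y ◁ (x ◁ (w ◁ z)) holds for all w, x, y, z ∈ G if and only if G is nilpotent of class at most 2, i.e., every commutator [x,y] = x⁻¹y⁻¹xy is central in G. -/
/-!
Unfolding, `w ◁ (x ◁ (y ◁ z)) = w x⁻¹ y z⁻¹ y x⁻¹ w`, and after the substitution
`w = x p`, `y = x q`, `z⁻¹ = u x⁻¹` the identity becomes `p q u q p = q p u p q` for all `p, q, u`.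
Writing `p q = q p c` with `c = p⁻¹ q⁻¹ p q`, this says `c (u q p) = (u q p) c`, and `u q p` ranges
over all of `G`.
-/

section

variable {G : Type*} [Group G]

def core (x y : G) : G := x * y⁻¹ * x

lemma core_core_core (w x y z : G) :
    core w (core x (core y z)) = w * x⁻¹ * y * z⁻¹ * y * x⁻¹ * w := by
  simp only [core]
  group

lemma core_identity_iff :
    (∀ w x y z : G, core w (core x (core y z)) = core y (core x (core w z))) ↔
      ∀ p q u : G, p * q * u * q * p = q * p * u * p * q := by
  simp only [core_core_core]
  constructor
  · intro h p q u
    simpa using h p 1 q u⁻¹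
  · intro h w x y z
    calc w * x⁻¹ * y * z⁻¹ * y * x⁻¹ * w
        = x * ((x⁻¹ * w) * (x⁻¹ * y) * (z⁻¹ * x) * (x⁻¹ * y) * (x⁻¹ * w)) := by group
      _ = x * ((x⁻¹ * y) * (x⁻¹ * w) * (z⁻¹ * x) * (x⁻¹ * w) * (x⁻¹ * y)) := by rw [h]
      _ = y * x⁻¹ * w * z⁻¹ * w * x⁻¹ * y := by group

lemma forall_mul_mul_comm_iff_mem_center (p q : G) :
    (∀ u : G, p * q * u * q * p = q * p * u * p * q) ↔
      p⁻¹ * q⁻¹ * p * q ∈ Subgroup.center G := by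
  set c := p⁻¹ * q⁻¹ * p * q with hc
  have key : ∀ u : G,
      p * q * u * q * p = q * p * u * p * q ↔ u * q * p * c = c * (u * q * p) := by
    intro u
    have hl : p * q * u * q * p = q * p * (c * (u * q * p)) := by rw [hc]; group
    have hr : q * p * u * p * q = q * p * (u * q * p * c) := by rw [hc]; group
    rw [hl, hr, mul_right_inj, eq_comm]
  rw [Subgroup.mem_center_iff]
  constructor
  · intro h g
    simpa using (key (g * p⁻¹ * q⁻¹)).mp (h _)
  · intro h u
    exact (key u).mpr (h _)

end

theorem core_abelian_identity_iff_class_two (G : Type*) [Group G] :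
    (∀ w x y z : G,
      w * (x * (y * z⁻¹ * y)⁻¹ * x)⁻¹ * w =
      y * (x * (w * z⁻¹ * w)⁻¹ * x)⁻¹ * y) ↔
    (∀ x y : G, x⁻¹ * y⁻¹ * x * y ∈ Subgroup.center G) := by
  change (∀ w x y z : G, core w (core x (core y z)) = core y (core x (core w z))) ↔ _
  rw [core_identity_iff]
  exact forall_congr' fun p ↦ forall_congr' fun q ↦ forall_mul_mul_comm_iff_mem_center p q
end

section
/- Let H be the Heisenberg group of upper triangular 3×3 integer matrices with 1's on the diagonal (equivalently, the free nilpotent group of class 2 on generators x, y). Then there exist elements a, b, c ∈ H such that no w ∈ H satisfies a ◁ (b ◁ c) = w ◁ c, where u ◁ v = u v⁻¹ u. Concretely, x y² x is not a square in H. -/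
/-- The integer Heisenberg group (free nilpotent group of class 2 on two
generators), presented via normal forms `x^i y^j [y,x]^k`, with multiplication
`(i,j,k)(i',j',k') = (i+i', j+j', k+k'+j*i')`. -/
structure Heis where
  i : ℤ
  j : ℤ
  k : ℤ

namespace Heis

instance : Mul Heis := ⟨fun a b => ⟨a.i + b.i, a.j + b.j, a.k + b.k + a.j * b.i⟩⟩
instance : One Heis := ⟨⟨0, 0, 0⟩⟩
instance : Inv Heis := ⟨fun a => ⟨-a.i, -a.j, -a.k + a.j * a.i⟩⟩

theorem mul_def (a b : Heis) :
    a * b = ⟨a.i + b.i, a.j + b.j, a.k + b.k + a.j * b.i⟩ := rfl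

instance : Group Heis where
  mul_assoc a b c := by
    simp only [mul_def, mk.injEq]
    refine ⟨by ring, by ring, by ring⟩
  one_mul a := by
    obtain ⟨i, j, k⟩ := a
    simp only [mul_def, mk.injEq]
    show (0 : ℤ) + i = i ∧ (0 : ℤ) + j = j ∧ 0 + k + 0 * i = k
    refine ⟨by ring, by ring, by ring⟩
  mul_one a := by
    obtain ⟨i, j, k⟩ := a
    simp only [mul_def, mk.injEq]
    show i + 0 = i ∧ j + 0 = j ∧ k + 0 + j * 0 = k
    refine ⟨by ring, by ring, by ring⟩
  inv_mul_cancel a := by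
    obtain ⟨i, j, k⟩ := a
    show (⟨-i + i, -j + j, (-k + j * i) + k + -j * i⟩ : Heis) = ⟨0, 0, 0⟩
    simp only [mk.injEq]
    refine ⟨by ring, by ring, by ring⟩

/-- The standard generators. -/
def x : Heis := ⟨1, 0, 0⟩
def y : Heis := ⟨0, 1, 0⟩

end Heis

/-! Squaring doubles the `x`- and `y`-exponents and gives the commutator exponent `2k + ji`, so
`⟨2a, 2b, c⟩` can only be a square if `c ≡ ab (mod 2)`. The element `x y² x = ⟨2, 2, 2⟩`
violates this, and it is `x ◁ (y⁻¹ ◁ 1)`, while `w ◁ 1 = w²`. -/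

namespace Heis

theorem mul_self_eq (w : Heis) : w * w = ⟨2 * w.i, 2 * w.j, 2 * w.k + w.j * w.i⟩ := by
  simp only [mul_def, mk.injEq]
  exact ⟨by ring, by ring, by ring⟩

theorem even_sub_mul_of_mul_self_eq {w : Heis} {a b c : ℤ} (h : w * w = ⟨2 * a, 2 * b, c⟩) :
    Even (c - a * b) := by
  obtain ⟨hi, hj, hk⟩ := (mk.injEq _ _ _ _ _ _).mp ((mul_self_eq w).symm.trans h)
  obtain rfl : w.i = a := by omega
  obtain rfl : w.j = b := by omega
  exact ⟨w.k, by linarith⟩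

theorem x_mul_y_mul_y_mul_x : x * y * y * x = ⟨2 * 1, 2 * 1, 2⟩ := rfl

theorem mul_self_ne_x_mul_y_mul_y_mul_x (w : Heis) : w * w ≠ x * y * y * x := fun h => by
  have := even_sub_mul_of_mul_self_eq (h.trans x_mul_y_mul_y_mul_x)
  norm_num at this

end Heis

theorem heisenberg_core_not_closed :
    (∃ a b c : Heis, ∀ w : Heis,
      a * (b * c⁻¹ * b)⁻¹ * a ≠ w * c⁻¹ * w) ∧
    (∀ w : Heis, w * w ≠ Heis.x * Heis.y * Heis.y * Heis.x) := by
  refine ⟨⟨Heis.x, Heis.y⁻¹, 1, fun w h => Heis.mul_self_ne_x_mul_y_mul_y_mul_x w ?_⟩,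
    Heis.mul_self_ne_x_mul_y_mul_y_mul_x⟩
  simpa [mul_assoc] using h.symm
end

section
/- Let G be the free abelian group ℤ³ with generators x, y, z, and H the group with underlying set ℤ³ and multiplication (i,j,k)·(i′,j′,k′) = (i+i′, j+j′, k+k′+2 j i′) (the class-2 nilpotent group with a central square root of the commutator). Then the map (i,j,k) ↦ (i, j, k − i j) is an isomorphism of core quandles from Core(H) to Core(G): it is a bijection satisfying φ(a ◁_H b) = φ(a) ◁_G φ(b) for all a, b, where u ◁ v = u v⁻¹ u in each group. -/
/-- The class-2 nilpotent group obtained from the integer Heisenberg group by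
adjoining a central square root of the commutator: underlying set `ℤ³` with
multiplication `(i,j,k)(i',j',k') = (i+i', j+j', k+k'+2ji')`. -/
structure HeisSqrt where
  i : ℤ
  j : ℤ
  k : ℤ

namespace HeisSqrt

instance : Mul HeisSqrt :=
  ⟨fun a b => ⟨a.i + b.i, a.j + b.j, a.k + b.k + 2 * a.j * b.i⟩⟩
instance : One HeisSqrt := ⟨⟨0, 0, 0⟩⟩
instance : Inv HeisSqrt := ⟨fun a => ⟨-a.i, -a.j, -a.k + 2 * a.j * a.i⟩⟩

theorem mul_def (a b : HeisSqrt) :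
    a * b = ⟨a.i + b.i, a.j + b.j, a.k + b.k + 2 * a.j * b.i⟩ := rfl

instance : Group HeisSqrt where
  mul_assoc a b c := by
    simp only [mul_def, mk.injEq]
    refine ⟨by ring, by ring, by ring⟩
  one_mul a := by
    obtain ⟨i, j, k⟩ := a
    show (⟨0 + i, 0 + j, 0 + k + 2 * 0 * i⟩ : HeisSqrt) = ⟨i, j, k⟩
    simp only [mk.injEq]
    refine ⟨by ring, by ring, by ring⟩
  mul_one a := by
    obtain ⟨i, j, k⟩ := a
    show (⟨i + 0, j + 0, k + 0 + 2 * j * 0⟩ : HeisSqrt) = ⟨i, j, k⟩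
    simp only [mk.injEq]
    refine ⟨by ring, by ring, by ring⟩
  inv_mul_cancel a := by
    obtain ⟨i, j, k⟩ := a
    show (⟨-i + i, -j + j, (-k + 2 * j * i) + k + 2 * -j * i⟩ : HeisSqrt)
      = ⟨0, 0, 0⟩
    simp only [mk.injEq]
    refine ⟨by ring, by ring, by ring⟩

end HeisSqrt

/-- The map `(i,j,k) ↦ (i, j, k - ij)` into the free abelian group `ℤ³`
(written multiplicatively). -/
def coreIso : HeisSqrt → Multiplicative (ℤ × ℤ × ℤ) :=
  fun a => Multiplicative.ofAdd (a.i, a.j, a.k - a.i * a.j)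

/-!
`coreIso` is a homomorphism up to the central defect `ω a b = a.j * b.i - a.i * b.j`, which is an
alternating bicharacter of `HeisSqrt`. For any such map the defects picked up along `x * y⁻¹ * x`,
namely `ω x y⁻¹ * ω (x * y⁻¹) x`, multiply to `1`, so the core operation is preserved.
-/

section AlternatingDefect

variable {H A : Type*} [Group H] [CommGroup A] {f : H → A} {ω : H →* H →* A}

theorem MonoidHom.apply_mul_apply_swap_eq_one (hω : ∀ x, ω x x = 1) (x y : H) :
    ω x y * ω y x = 1 := by
  have h := hω (x * y)
  simp only [map_mul, MonoidHom.mul_apply, hω, one_mul, mul_one] at h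
  rwa [mul_comm (ω y x)] at h

theorem map_inv_of_map_mul_eq_mul_mul (hf : ∀ x y, f (x * y) = f x * f y * ω x y)
    (hω : ∀ x, ω x x = 1) (x : H) : f x⁻¹ = (f x)⁻¹ := by
  have hf_one : f 1 = 1 := by
    simpa [hω] using hf 1 1
  refine eq_inv_of_mul_eq_one_right ?_
  simpa [hf_one, hω] using (hf x x⁻¹).symm

theorem map_mul_inv_mul_of_map_mul_eq_mul_mul (hf : ∀ x y, f (x * y) = f x * f y * ω x y)
    (hω : ∀ x, ω x x = 1) (x y : H) : f (x * y⁻¹ * x) = f x * (f y)⁻¹ * f x := by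
  have hswap := MonoidHom.apply_mul_apply_swap_eq_one hω x y
  rw [hf, hf, map_inv_of_map_mul_eq_mul_mul hf hω, map_mul, MonoidHom.mul_apply, hω, map_inv,
    map_inv, MonoidHom.inv_apply, eq_inv_of_mul_eq_one_right hswap]
  simp [mul_comm, mul_left_comm, mul_assoc]

end AlternatingDefect

namespace HeisSqrt

def coreDefect : HeisSqrt →* HeisSqrt →* Multiplicative (ℤ × ℤ × ℤ) :=
  MonoidHom.mk'
    (fun a => MonoidHom.mk' (fun b => Multiplicative.ofAdd (0, 0, a.j * b.i - a.i * b.j))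
      fun b c => by
        apply Multiplicative.toAdd.injective
        simp only [mul_def, toAdd_mul, toAdd_ofAdd, Prod.mk_add_mk, add_zero, Prod.mk.injEq,
          true_and]
        ring)
    fun a b => MonoidHom.ext fun c => by
      apply Multiplicative.toAdd.injective
      simp only [mul_def, MonoidHom.mk'_apply, MonoidHom.mul_apply, toAdd_mul, toAdd_ofAdd,
        Prod.mk_add_mk, add_zero, Prod.mk.injEq, true_and]
      ring

theorem coreDefect_self (a : HeisSqrt) : coreDefect a a = 1 := by
  apply Multiplicative.toAdd.injective
  simp [coreDefect, mul_comm]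

theorem coreIso_mul (a b : HeisSqrt) :
    coreIso (a * b) = coreIso a * coreIso b * coreDefect a b := by
  apply Multiplicative.toAdd.injective
  simp only [coreIso, coreDefect, mul_def, MonoidHom.mk'_apply, toAdd_mul, toAdd_ofAdd,
    Prod.mk_add_mk, add_zero, Prod.mk.injEq, true_and]
  ring

end HeisSqrt

def coreIsoEquiv : HeisSqrt ≃ Multiplicative (ℤ × ℤ × ℤ) where
  toFun := coreIso
  invFun g := ⟨g.toAdd.1, g.toAdd.2.1, g.toAdd.2.2 + g.toAdd.1 * g.toAdd.2.1⟩
  left_inv a := by simp [coreIso]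
  right_inv g := by simp [coreIso]

theorem heisSqrt_core_iso_abelian :
    Function.Bijective coreIso ∧
    ∀ a b : HeisSqrt,
      coreIso (a * b⁻¹ * a) = coreIso a * (coreIso b)⁻¹ * coreIso a :=
  ⟨coreIsoEquiv.bijective,
    map_mul_inv_mul_of_map_mul_eq_mul_mul HeisSqrt.coreIso_mul HeisSqrt.coreDefect_self⟩
end
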